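/- Let A₀ be a unital C*-algebra containing positive elements q_0, …, q_{n−1} such that ∑_{i<n} q_i = 1 and such that for all i, j < n, all k ∈ ℕ, and every ε > 0 there exists a₀ ∈ A₀ with ‖a₀‖ = 1 and ‖q_i^k·a₀·q_j^k‖ ≥ 1 − ε. For α : {0,…,n−1} → 𝕋 let u_α = ∑_{i<n} α(i)·q_i. Then, with I = {0,…,n−1}: Δ_I(α,1) ≤ sup_{a ∈ A₀, ‖a‖ ≤ 1} ‖u_α·a·u_α* − a‖ ≤ 2·Δ_I(α,1). -/

import Mathlib

/-!
Write `u = ∑ αᵢ qᵢ`. Because the `qᵢ` are positive and sum to `1`, expanding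
`0 ≤ ∑ (v - cᵢ)^* qᵢ (v - cᵢ)` for `v = ∑ cᵢ qᵢ` gives `v^* v ≤ ∑ |cᵢ|² qᵢ`; in particular
`‖∑ cᵢ qᵢ‖ ≤ maxᵢ |cᵢ|`.

Upper bound: `‖u - α₀‖ ≤ Δ`, and `u a u^* - a = (u - α₀) a u^* + α₀ a (u - α₀)^*`.

Lower bound: applied to `cₗ = αₗ - αᵢ`, which vanishes at `i`, the inequality gives
`‖(u - αᵢ) qᵢ^m‖² ≤ 4 ‖qᵢ^m (1 - qᵢ) qᵢ^m‖ ≤ 4 / (2m + 1)`, since `t^m (1 - t) ≤ 1 / (m + 1)` on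
`[0, 1]`. So `b = qᵢ^m a₀ qⱼ^m` satisfies `u b u^* ≈ αᵢ ᾱⱼ b`, while `‖b‖ ≈ 1` by hypothesis;
letting `m → ∞` gives `|αᵢ ᾱⱼ - 1| ≤ ‖Ad u - id‖`.
-/

open Filter Topology MultiplierAlgebra

noncomputable section

/-- `Δ_I(α,β) = max_{i,j ∈ I} |α(i)·conj(α(j)) − β(i)·conj(β(j))|`
(the maximum over the empty set being `0`). -/
def Delta (I : Finset ℕ) (α β : ℕ → Circle) : ℝ :=
  ((I ×ˢ I).sup fun p : ℕ × ℕ =>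
    ‖(α p.1 : ℂ) * (starRingEnd ℂ) (α p.2 : ℂ) -
      (β p.1 : ℂ) * (starRingEnd ℂ) (β p.2 : ℂ)‖₊ : NNReal)

/-- `n(X,j)`: the `j`-th element of `{0} ∪ X` in increasing order. -/
def nEnum (X : Set ℕ) (j : ℕ) : ℕ := Nat.nth (· ∈ insert 0 X) j

/-- `I(X,j) = [n(X,j), n(X,j+1))`, as a finite set of naturals. -/
def intvl (X : Set ℕ) (j : ℕ) : Finset ℕ := Finset.Ico (nEnum X j) (nEnum X (j + 1))

/-- Membership in `F_X`: `lim_j Δ_{I(X,j) ∪ I(X,j+1)}(α, 1) = 0`. -/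
def memF (X : Set ℕ) (α : ℕ → Circle) : Prop :=
  Tendsto (fun j => Delta (intvl X j ∪ intvl X (j + 1)) α 1) atTop (𝓝 0)

/-- `Y ⊆* X`: almost inclusion, i.e. `Y \ X` is finite. -/
def AlmostSubset (Y X : Set ℕ) : Prop := (Y \ X).Finite

/-- `selfPow a k` is the `(k+1)`-st power `a^(k+1)` of `a`; this makes sense in a
non-unital algebra (where there is no `a^0`), and as `k` ranges over `ℕ` it realizes all
(positive) powers of `a`. -/
def selfPow {A : Type*} [Mul A] (a : A) : ℕ → A
  | 0 => a
  | k + 1 => a * selfPow a k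

open Finset

lemma selfPow_eq_pow {M : Type*} [Monoid M] (a : M) (k : ℕ) : selfPow a k = a ^ (k + 1) := by
  induction k with
  | zero => simp [selfPow]
  | succ k ih => rw [selfPow, ih, ← pow_succ']

section Delta

variable {I : Finset ℕ} {α β : ℕ → Circle}

lemma Delta_nonneg : 0 ≤ Delta I α β := NNReal.coe_nonneg _

lemma norm_le_Delta {i j : ℕ} (hi : i ∈ I) (hj : j ∈ I) :
    ‖(α i : ℂ) * starRingEnd ℂ (α j) - β i * starRingEnd ℂ (β j)‖ ≤ Delta I α β := by
  have h := le_sup (f := fun p : ℕ × ℕ =>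
    ‖(α p.1 : ℂ) * starRingEnd ℂ (α p.2) - β p.1 * starRingEnd ℂ (β p.2)‖₊)
    (mem_product.2 ⟨hi, hj⟩ : (i, j) ∈ I ×ˢ I)
  exact_mod_cast h

lemma Delta_le {r : ℝ} (hr : 0 ≤ r)
    (h : ∀ i ∈ I, ∀ j ∈ I, ‖(α i : ℂ) * starRingEnd ℂ (α j) - β i * starRingEnd ℂ (β j)‖ ≤ r) :
    Delta I α β ≤ r := by
  rw [Delta, ← Real.coe_toNNReal r hr, NNReal.coe_le_coe]
  refine Finset.sup_le fun p hp => ?_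
  rw [Real.le_toNNReal_iff_coe_le hr, coe_nnnorm]
  exact h p.1 (mem_product.1 hp).1 p.2 (mem_product.1 hp).2

lemma norm_sub_le_Delta_one {i j : ℕ} (hi : i ∈ I) (hj : j ∈ I) :
    ‖(α i : ℂ) - α j‖ ≤ Delta I α 1 := by
  have h : (α i : ℂ) * starRingEnd ℂ (α j) - 1 = ((α i : ℂ) - α j) * starRingEnd ℂ (α j) := by
    rw [sub_mul, Complex.mul_conj', Circle.norm_coe]; simp
  simpa [h, Circle.norm_coe] using norm_le_Delta (α := α) (β := 1) hi hj

end Delta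

lemma pow_mul_one_sub_le_one_div (m : ℕ) {t : ℝ} (h0 : 0 ≤ t) (h1 : t ≤ 1) :
    t ^ m * (1 - t) ≤ 1 / (m + 1) := by
  rw [le_div_iff₀ (by positivity)]
  calc t ^ m * (1 - t) * (m + 1) = (∑ _k ∈ range (m + 1), t ^ m) * (1 - t) := by simp; ring
    _ ≤ (∑ k ∈ range (m + 1), t ^ k) * (1 - t) := by
        refine mul_le_mul_of_nonneg_right (sum_le_sum fun k hk => ?_) (by linarith)
        exact pow_le_pow_of_le_one h0 h1 (Nat.lt_succ_iff.1 (mem_range.1 hk))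
    _ = 1 - t ^ (m + 1) := geom_sum_mul_neg t (m + 1)
    _ ≤ 1 := by linarith [pow_nonneg h0 (m + 1)]

section CStarAlgebra

variable {A : Type*} [CStarAlgebra A]

lemma norm_mul_mul_star_sub_le (u a : A) {z : ℂ} (hz : ‖z‖ = 1) (hu : ‖u‖ ≤ 1) :
    ‖u * a * star u - a‖ ≤ 2 * ‖u - z • 1‖ * ‖a‖ := by
  have hzz : z * starRingEnd ℂ z = 1 := by simp [Complex.mul_conj', hz]
  have hsplit : u * a * star u - a = (u - z • 1) * a * star u + z • (a * star (u - z • 1)) := by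
    rw [star_sub, star_smul, star_one]
    simp only [sub_mul, mul_sub, smul_mul_assoc, mul_smul_comm, smul_sub, smul_smul, one_mul,
      mul_one, Complex.star_def, hzz, one_smul]
    abel
  calc ‖u * a * star u - a‖
      ≤ ‖u - z • 1‖ * ‖a‖ * ‖star u‖ + ‖z‖ * (‖a‖ * ‖star (u - z • 1)‖) := by
        rw [hsplit]
        refine (norm_add_le _ _).trans (add_le_add norm_mul₃_le ?_)
        rw [norm_smul]
        gcongr
        exact norm_mul_le _ _
    _ ≤ 2 * ‖u - z • 1‖ * ‖a‖ := by
        rw [norm_star, norm_star, hz]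
        nlinarith [mul_le_of_le_one_right (by positivity : 0 ≤ ‖u - z • 1‖ * ‖a‖) hu]

lemma norm_mul_conj_sub_one_mul_le {u a p₁ p₂ : A} {z w : ℂ} (hz : ‖z‖ = 1) (hu : ‖u‖ ≤ 1)
    (ha : ‖a‖ ≤ 1) (hp₁ : ‖p₁‖ ≤ 1) (hp₂ : ‖p₂‖ ≤ 1) (hp₂sa : IsSelfAdjoint p₂) :
    ‖z * starRingEnd ℂ w - 1‖ * ‖p₁ * a * p₂‖ ≤
      ‖u * (p₁ * a * p₂) * star u - p₁ * a * p₂‖ + ‖(u - z • 1) * p₁‖ + ‖(u - w • 1) * p₂‖ := by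
  set b := p₁ * a * p₂
  have hsplit : (z * starRingEnd ℂ w - 1) • b = (u * b * star u - b) -
      ((u - z • 1) * p₁ * (a * p₂ * star u) + z • (p₁ * a * star ((u - w • 1) * p₂))) := by
    rw [star_mul, hp₂sa.star_eq, star_sub, star_smul, star_one]
    simp only [b, sub_mul, mul_sub, smul_mul_assoc, mul_smul_comm, smul_sub, sub_smul, smul_smul,
      one_mul, mul_one, one_smul, mul_assoc, Complex.star_def]
    abel
  have h₁ : ‖(u - z • 1) * p₁ * (a * p₂ * star u)‖ ≤ ‖(u - z • 1) * p₁‖ := by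
    refine (norm_mul_le _ _).trans (mul_le_of_le_one_right (norm_nonneg _) ?_)
    refine norm_mul₃_le.trans ?_
    rw [norm_star]
    exact mul_le_one₀ (mul_le_one₀ ha (norm_nonneg _) hp₂) (norm_nonneg _) hu
  have h₂ : ‖z • (p₁ * a * star ((u - w • 1) * p₂))‖ ≤ ‖(u - w • 1) * p₂‖ := by
    rw [norm_smul, hz, one_mul]
    refine norm_mul₃_le.trans ?_
    rw [norm_star]
    exact mul_le_of_le_one_left (norm_nonneg _) (mul_le_one₀ hp₁ (norm_nonneg _) ha)
  calc ‖z * starRingEnd ℂ w - 1‖ * ‖b‖ = ‖(z * starRingEnd ℂ w - 1) • b‖ := (norm_smul _ _).symm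
    _ ≤ _ := by
        rw [hsplit]
        refine (norm_sub_le _ _).trans ?_
        linarith [norm_add_le ((u - z • 1) * p₁ * (a * p₂ * star u))
          (z • (p₁ * a * star ((u - w • 1) * p₂)))]

lemma sum_smul_sub_smul_one {ι : Type*} {s : Finset ι} {q : ι → A}
    (hsum : ∑ i ∈ s, q i = 1) (c : ι → ℂ) (z : ℂ) :
    ∑ i ∈ s, c i • q i - z • 1 = ∑ i ∈ s, (c i - z) • q i := by
  simp_rw [sub_smul, sum_sub_distrib, ← smul_sum, hsum]

variable [PartialOrder A] [StarOrderedRing A]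

lemma norm_pow_sub_pow_succ_le {a : A} (ha : 0 ≤ a) (ha1 : a ≤ 1) (m : ℕ) :
    ‖a ^ m - a ^ (m + 1)‖ ≤ 1 / (m + 1) := by
  have hcfc : a ^ m - a ^ (m + 1) = cfc (fun t : ℝ => t ^ m - t ^ (m + 1)) a := by
    rw [cfc_sub _ _ a, cfc_pow_id a, cfc_pow_id a]
  rw [hcfc]
  refine norm_cfc_le (by positivity) fun x hx => ?_
  have hx0 : 0 ≤ x := spectrum_nonneg_of_nonneg ha hx
  have hx1 : x ≤ 1 := (CFC.le_one_iff (R := ℝ) a).1 ha1 x hx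
  rw [Real.norm_eq_abs, pow_succ, ← mul_one_sub,
    abs_of_nonneg (mul_nonneg (pow_nonneg hx0 _) (by linarith))]
  exact pow_mul_one_sub_le_one_div m hx0 hx1

section PartitionOfUnity

variable {ι : Type*} {s : Finset ι} {q : ι → A}

lemma le_one_of_sum_eq_one (hpos : ∀ i ∈ s, 0 ≤ q i) (hsum : ∑ i ∈ s, q i = 1) {i : ι}
    (hi : i ∈ s) : q i ≤ 1 :=
  hsum ▸ single_le_sum hpos hi

lemma star_sum_smul_of_nonneg (hpos : ∀ i ∈ s, 0 ≤ q i) (c : ι → ℂ) :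
    star (∑ i ∈ s, c i • q i) = ∑ i ∈ s, starRingEnd ℂ (c i) • q i := by
  rw [star_sum]
  refine sum_congr rfl fun i hi => ?_
  rw [star_smul, (IsSelfAdjoint.of_nonneg (hpos i hi)).star_eq]
  rfl

lemma star_mul_self_sum_smul_le (hpos : ∀ i ∈ s, 0 ≤ q i) (hsum : ∑ i ∈ s, q i = 1)
    (c : ι → ℂ) :
    star (∑ i ∈ s, c i • q i) * (∑ i ∈ s, c i • q i) ≤ ∑ i ∈ s, (‖c i‖ ^ 2 : ℝ) • q i := by
  set v := ∑ i ∈ s, c i • q i with hv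
  have hterm : ∀ i ∈ s, star (v - c i • 1) * q i * (v - c i • 1) =
      star v * q i * v - c i • (star v * q i) - starRingEnd ℂ (c i) • (q i * v)
        + (‖c i‖ ^ 2 : ℝ) • q i := by
    intro i _
    rw [star_sub, star_smul, star_one, ← Complex.coe_smul, Complex.ofReal_pow, ← Complex.conj_mul']
    simp only [sub_mul, mul_sub, smul_mul_assoc, mul_smul_comm, one_mul, mul_one,
      Complex.star_def]
    module
  have hexpand : ∑ i ∈ s, star (v - c i • 1) * q i * (v - c i • 1) =
      ∑ i ∈ s, (‖c i‖ ^ 2 : ℝ) • q i - star v * v := by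
    have e1 : ∑ i ∈ s, star v * q i * v = star v * v := by rw [← sum_mul, ← mul_sum, hsum, mul_one]
    have e2 : ∑ i ∈ s, c i • (star v * q i) = star v * v := by
      simp_rw [← mul_smul_comm]
      exact (mul_sum _ _ _).symm
    have e3 : ∑ i ∈ s, starRingEnd ℂ (c i) • (q i * v) = star v * v := by
      simp_rw [← smul_mul_assoc, ← sum_mul, ← star_sum_smul_of_nonneg hpos]
      rfl
    rw [sum_congr rfl hterm, sum_add_distrib, sum_sub_distrib, sum_sub_distrib, e1, e2, e3]
    abel
  rw [← sub_nonneg, ← hexpand]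
  exact sum_nonneg fun i hi => star_left_conjugate_nonneg (hpos i hi) _

lemma norm_sum_smul_le (hpos : ∀ i ∈ s, 0 ≤ q i) (hsum : ∑ i ∈ s, q i = 1) {c : ι → ℂ}
    {M : ℝ} (hM0 : 0 ≤ M) (hM : ∀ i ∈ s, ‖c i‖ ≤ M) : ‖∑ i ∈ s, c i • q i‖ ≤ M := by
  have hle : star (∑ i ∈ s, c i • q i) * (∑ i ∈ s, c i • q i) ≤ algebraMap ℝ A (M ^ 2) := calc
    _ ≤ ∑ i ∈ s, (‖c i‖ ^ 2 : ℝ) • q i := star_mul_self_sum_smul_le hpos hsum c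
    _ ≤ ∑ i ∈ s, M ^ 2 • q i := sum_le_sum fun i hi =>
        smul_le_smul_of_nonneg_right (pow_le_pow_left₀ (norm_nonneg _) (hM i hi) 2) (hpos i hi)
    _ = algebraMap ℝ A (M ^ 2) := by rw [← smul_sum, hsum, Algebra.algebraMap_eq_smul_one]
  have h := (CStarAlgebra.norm_le_iff_le_algebraMap _ (by positivity)
    (star_mul_self_nonneg _)).2 hle
  rw [CStarRing.norm_star_mul_self, ← sq] at h
  exact (sq_le_sq₀ (norm_nonneg _) hM0).1 h

lemma norm_sum_smul_mul_mul_star_sub_le (hpos : ∀ i ∈ s, 0 ≤ q i) (hsum : ∑ i ∈ s, q i = 1)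
    {c : ι → ℂ} (hc : ∀ i ∈ s, ‖c i‖ = 1) {z : ℂ} (hz : ‖z‖ = 1) {D : ℝ} (hD0 : 0 ≤ D)
    (hD : ∀ i ∈ s, ‖c i - z‖ ≤ D) (a : A) :
    ‖(∑ i ∈ s, c i • q i) * a * star (∑ i ∈ s, c i • q i) - a‖ ≤ 2 * D * ‖a‖ := by
  have hu := norm_sum_smul_le hpos hsum zero_le_one fun i hi => (hc i hi).le
  have hsub : ‖∑ i ∈ s, c i • q i - z • 1‖ ≤ D := by
    rw [sum_smul_sub_smul_one hsum]
    exact norm_sum_smul_le hpos hsum hD0 hD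
  calc _ ≤ 2 * ‖∑ i ∈ s, c i • q i - z • 1‖ * ‖a‖ := norm_mul_mul_star_sub_le _ a hz hu
    _ ≤ 2 * D * ‖a‖ := by gcongr

lemma sq_norm_sum_smul_mul_pow_le [DecidableEq ι] (hpos : ∀ i ∈ s, 0 ≤ q i)
    (hsum : ∑ i ∈ s, q i = 1) {c : ι → ℂ} {M : ℝ} (hM : ∀ j ∈ s, ‖c j‖ ≤ M) {i : ι}
    (hi : i ∈ s) (hci : c i = 0) (m : ℕ) :
    ‖(∑ j ∈ s, c j • q j) * q i ^ m‖ ^ 2 ≤ M ^ 2 / (2 * m + 1) := by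
  set v := ∑ j ∈ s, c j • q j
  have hp : IsSelfAdjoint (q i ^ m) := (IsSelfAdjoint.of_nonneg (hpos i hi)).pow m
  have hvv : star v * v ≤ M ^ 2 • (1 - q i) := calc
    star v * v ≤ ∑ j ∈ s, (‖c j‖ ^ 2 : ℝ) • q j := star_mul_self_sum_smul_le hpos hsum c
    _ = ∑ j ∈ s.erase i, (‖c j‖ ^ 2 : ℝ) • q j := (sum_erase _ (by simp [hci])).symm
    _ ≤ ∑ j ∈ s.erase i, M ^ 2 • q j := sum_le_sum fun j hj =>
        smul_le_smul_of_nonneg_right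
          (pow_le_pow_left₀ (norm_nonneg _) (hM j (mem_of_mem_erase hj)) 2)
          (hpos j (mem_of_mem_erase hj))
    _ = M ^ 2 • (1 - q i) := by rw [← smul_sum, sum_erase_eq_sub hi, hsum]
  have hle : star (v * q i ^ m) * (v * q i ^ m) ≤ M ^ 2 • (q i ^ (2 * m) - q i ^ (2 * m + 1)) := by
    have h := star_left_conjugate_le_conjugate hvv (q i ^ m)
    rw [hp.star_eq] at h
    convert h using 1
    · rw [star_mul, hp.star_eq]; noncomm_ring
    · rw [mul_smul_comm, smul_mul_assoc, mul_sub, sub_mul, mul_one, ← pow_add, ← pow_succ,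
        ← pow_add]
      ring_nf
  calc ‖v * q i ^ m‖ ^ 2 = ‖star (v * q i ^ m) * (v * q i ^ m)‖ := by
        rw [CStarRing.norm_star_mul_self, sq]
    _ ≤ ‖M ^ 2 • (q i ^ (2 * m) - q i ^ (2 * m + 1))‖ :=
        CStarAlgebra.norm_le_norm_of_nonneg_of_le (star_mul_self_nonneg _) hle
    _ ≤ M ^ 2 * (1 / (2 * m + 1)) := by
        rw [norm_smul, Real.norm_of_nonneg (sq_nonneg M)]
        gcongr
        exact_mod_cast norm_pow_sub_pow_succ_le (hpos i hi) (le_one_of_sum_eq_one hpos hsum hi) _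
    _ = M ^ 2 / (2 * m + 1) := by ring

lemma norm_mul_conj_sub_one_le [DecidableEq ι] (hpos : ∀ i ∈ s, 0 ≤ q i)
    (hsum : ∑ i ∈ s, q i = 1) {c : ι → ℂ} (hc : ∀ i ∈ s, ‖c i‖ = 1) {i j : ι} (hi : i ∈ s)
    (hj : j ∈ s) {S : ℝ}
    (hS : ∀ a : A, ‖a‖ ≤ 1 →
      ‖(∑ l ∈ s, c l • q l) * a * star (∑ l ∈ s, c l • q l) - a‖ ≤ S)
    (hnorms : ∀ m : ℕ, ∀ ε > 0, ∃ a₀ : A, ‖a₀‖ ≤ 1 ∧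
      1 - ε ≤ ‖q i ^ (m + 1) * a₀ * q j ^ (m + 1)‖) :
    ‖c i * starRingEnd ℂ (c j) - 1‖ ≤ S := by
  set u := ∑ l ∈ s, c l • q l
  set δ := ‖c i * starRingEnd ℂ (c j) - 1‖
  have hu : ‖u‖ ≤ 1 := norm_sum_smul_le hpos hsum zero_le_one fun l hl => (hc l hl).le
  have hpow : ∀ k ∈ s, ∀ m : ℕ, ‖q k ^ (m + 1)‖ ≤ 1 := fun k hk m =>
    (norm_pow_le' _ m.succ_pos).trans <| pow_le_one₀ (norm_nonneg _) <|
      (CStarAlgebra.norm_le_one_iff_of_nonneg _ (hpos k hk)).2 (le_one_of_sum_eq_one hpos hsum hk)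
  have hcut : ∀ k ∈ s, ∀ m : ℕ, ‖(u - c k • 1) * q k ^ (m + 1)‖ ≤ 2 * √(1 / (m + 1)) := by
    intro k hk m
    have h := sq_norm_sum_smul_mul_pow_le hpos hsum (c := fun l => c l - c k) (M := 2)
      (fun l hl => (norm_sub_le _ _).trans (by rw [hc l hl, hc k hk]; norm_num)) hk
      (sub_self _) (m + 1)
    rw [← sum_smul_sub_smul_one hsum] at h
    refine (sq_le_sq₀ (norm_nonneg _) (by positivity)).1 (h.trans ?_)
    rw [mul_pow, Real.sq_sqrt (by positivity)]
    push_cast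
    rw [mul_one_div]
    gcongr
    linarith
  have hbound : ∀ m : ℕ, δ * (1 - 1 / (m + 1)) - 4 * √(1 / (m + 1)) ≤ S := by
    intro m
    obtain ⟨a₀, ha₀, hlow⟩ := hnorms m (1 / (m + 1)) (by positivity)
    have hb : ‖q i ^ (m + 1) * a₀ * q j ^ (m + 1)‖ ≤ 1 := norm_mul₃_le.trans
      (mul_le_one₀ (mul_le_one₀ (hpow i hi m) (norm_nonneg _) ha₀) (norm_nonneg _) (hpow j hj m))
    have h := norm_mul_conj_sub_one_mul_le (u := u) (w := c j) (hc i hi) hu ha₀ (hpow i hi m)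
      (hpow j hj m) ((IsSelfAdjoint.of_nonneg (hpos j hj)).pow _)
    have := (mul_le_mul_of_nonneg_left hlow (norm_nonneg _)).trans <|
      h.trans (add_le_add (add_le_add (hS _ hb) (hcut i hi m)) (hcut j hj m))
    linarith
  have hlim : Tendsto (fun m : ℕ => δ * (1 - 1 / (m + 1)) - 4 * √(1 / (m + 1))) atTop (𝓝 δ) := by
    have h := tendsto_one_div_add_atTop_nhds_zero_nat (𝕜 := ℝ)
    simpa using ((h.const_sub 1).const_mul δ).sub (h.sqrt.const_mul 4)
  exact le_of_tendsto' hlim hbound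

end PartitionOfUnity

end CStarAlgebra

/-- STATEMENT 17: the analogue of Statement 14 for positive elements `q_i` summing
to `1` and satisfying the norm condition on powers:
`Δ_I(α,1) ≤ ‖Ad u_α − id‖ ≤ 2 Δ_I(α,1)`.
(`selfPow (q i) k` is the `(k+1)`-st power of `q i`, realizing all positive powers.) -/
theorem ad_norm_bounds_weak (A₀ : Type*) [CStarAlgebra A₀] [PartialOrder A₀]
    [StarOrderedRing A₀] (n : ℕ) (q : ℕ → A₀)
    (hpos : ∀ i < n, 0 ≤ q i)
    (hsum : ∑ i ∈ Finset.range n, q i = 1)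
    (hnorms : ∀ i < n, ∀ j < n, ∀ k : ℕ, ∀ ε : ℝ, 0 < ε →
      ∃ a₀ : A₀, ‖a₀‖ = 1 ∧ 1 - ε ≤ ‖selfPow (q i) k * a₀ * selfPow (q j) k‖)
    (α : ℕ → Circle) :
    Delta (Finset.range n) α 1 ≤
      (⨆ a : {a : A₀ // ‖a‖ ≤ 1},
        ‖(∑ i ∈ Finset.range n, (α i : ℂ) • q i) * a *
            star (∑ i ∈ Finset.range n, (α i : ℂ) • q i) - (a : A₀)‖) ∧
    (⨆ a : {a : A₀ // ‖a‖ ≤ 1},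
        ‖(∑ i ∈ Finset.range n, (α i : ℂ) • q i) * a *
            star (∑ i ∈ Finset.range n, (α i : ℂ) • q i) - (a : A₀)‖) ≤
      2 * Delta (Finset.range n) α 1 := by
  set u := ∑ i ∈ range n, (α i : ℂ) • q i
  have hpos' : ∀ i ∈ range n, 0 ≤ q i := fun i hi => hpos i (mem_range.1 hi)
  have hupper : ∀ a : A₀, ‖a‖ ≤ 1 → ‖u * a * star u - a‖ ≤ 2 * Delta (range n) α 1 :=
    fun a ha => (norm_sum_smul_mul_mul_star_sub_le hpos' hsum (fun i _ => Circle.norm_coe (α i))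
      (Circle.norm_coe (α 0)) Delta_nonneg (fun i hi => norm_sub_le_Delta_one hi
        (mem_range.2 (Nat.zero_lt_of_lt (mem_range.1 hi)))) a).trans
      (mul_le_of_le_one_right (mul_nonneg zero_le_two Delta_nonneg) ha)
  have hbdd : BddAbove (Set.range fun a : {a : A₀ // ‖a‖ ≤ 1} => ‖u * a * star u - a‖) :=
    ⟨_, Set.forall_mem_range.2 fun a => hupper a a.2⟩
  have : Nonempty {a : A₀ // ‖a‖ ≤ 1} := ⟨⟨0, by simp⟩⟩
  refine ⟨Delta_le (Real.iSup_nonneg fun _ => norm_nonneg _) fun i hi j hj => ?_,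
    ciSup_le fun a => hupper a a.2⟩
  simpa using norm_mul_conj_sub_one_le hpos' hsum (fun i _ => Circle.norm_coe (α i)) hi hj
    (fun a ha => le_ciSup hbdd ⟨a, ha⟩) fun m ε hε => by
      obtain ⟨a₀, ha₀, h⟩ := hnorms i (mem_range.1 hi) j (mem_range.1 hj) m ε hε
      exact ⟨a₀, ha₀.le, by simpa only [selfPow_eq_pow] using h⟩
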